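/- Let G be a torsion-free group and let g₁, ..., gₙ ∈ G. Then the product (1 - g₁)(1 - g₂)···(1 - gₙ) equals 0 in the integral group ring ℤ[G] if and only if gᵢ = 1 for at least one i. -/

import Mathlib

/-! If `g` has infinite order, then `(1 - g) * x = 0` says `g * x = x`, so the coefficients of `x`
are constant along the infinite orbits `n ↦ gⁿ * a`; a finitely supported `x` must then vanish.
Hence each factor `1 - gᵢ` with `gᵢ ≠ 1` is a left non-zero-divisor, and a product of such
factors and zeros vanishes exactly when one factor is zero. -/

theorem List.prod_eq_zero_iff_of_forall_eq_zero_or_mem_nonZeroDivisorsLeft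
    {M₀ : Type*} [MonoidWithZero M₀] [Nontrivial M₀] {l : List M₀}
    (hl : ∀ a ∈ l, a = 0 ∨ a ∈ nonZeroDivisorsLeft M₀) : l.prod = 0 ↔ (0 : M₀) ∈ l := by
  refine ⟨fun h => ?_, List.prod_eq_zero⟩
  by_contra h0
  have hmem : l.prod ∈ nonZeroDivisorsLeft M₀ :=
    Submonoid.list_prod_mem _ fun a ha => (hl a ha).resolve_left (ne_of_mem_of_not_mem ha h0)
  exact one_ne_zero (hmem 1 (by rw [h, zero_mul]))

namespace MonoidAlgebra

variable {k G : Type*} [Group G]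

theorem eq_zero_of_of_mul_eq_self [Semiring k] {g : G} (hg : ¬IsOfFinOrder g)
    {x : MonoidAlgebra k G} (hx : of k G g * x = x) : x = 0 := by
  have hshift : ∀ (n : ℕ) (a : G), x.coeff (g ^ n * a) = x.coeff a := by
    intro n a
    induction n with
    | zero => rw [pow_zero, one_mul]
    | succ n ih =>
      calc x.coeff (g ^ (n + 1) * a)
          = (of k G g * x).coeff (g ^ (n + 1) * a) := by rw [hx]
        _ = x.coeff (g ^ n * a) := by
          rw [of_apply, coeff_single_mul_apply, one_mul, pow_succ', mul_assoc, inv_mul_cancel_left]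
        _ = x.coeff a := ih
  by_contra hne
  obtain ⟨a, ha⟩ : ∃ a, x.coeff a ≠ 0 := by
    by_contra! h
    exact hne (coeff_eq_zero.mp (Finsupp.ext h))
  have hinj : Function.Injective fun n : ℕ => g ^ n * a :=
    fun m n hmn => injective_pow_iff_not_isOfFinOrder.mpr hg (mul_right_cancel hmn)
  refine Set.infinite_of_injective_forall_mem hinj (fun n => ?_) x.coeff.support.finite_toSet
  simpa [hshift n a] using ha

theorem one_sub_of_mem_nonZeroDivisorsLeft [Ring k] {g : G} (hg : ¬IsOfFinOrder g) :
    1 - of k G g ∈ nonZeroDivisorsLeft (MonoidAlgebra k G) := fun x hx =>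
  eq_zero_of_of_mul_eq_self hg (by rwa [sub_mul, one_mul, sub_eq_zero, eq_comm] at hx)

theorem one_sub_of_eq_zero_iff [Ring k] [Nontrivial k] {g : G} :
    1 - of k G g = 0 ↔ g = 1 := by
  rw [sub_eq_zero, eq_comm, ← map_one (of k G), (of_injective (R := k)).eq_iff]

end MonoidAlgebra

theorem prod_one_sub_eq_zero_iff_torsionFree
    {G : Type*} [Group G] (hG : ∀ g : G, g ≠ 1 → ¬IsOfFinOrder g) (gs : List G) :
    ((gs.map fun g => (1 : MonoidAlgebra ℤ G) - MonoidAlgebra.of ℤ G g)).prod = 0 ↔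
      ∃ g ∈ gs, g = 1 := by
  rw [List.prod_eq_zero_iff_of_forall_eq_zero_or_mem_nonZeroDivisorsLeft]
  · simp only [List.mem_map, MonoidAlgebra.one_sub_of_eq_zero_iff]
  · simp only [List.mem_map, forall_exists_index, and_imp, forall_apply_eq_imp_iff₂]
    intro g _
    rw [MonoidAlgebra.one_sub_of_eq_zero_iff]
    exact (em (g = 1)).imp_right fun hg =>
      MonoidAlgebra.one_sub_of_mem_nonZeroDivisorsLeft (hG g hg)
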